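/- Let A be a Banach algebra and X a Banach A-bimodule. Suppose f, g : A → X satisfy ‖f(c²) − c·f(c) − g(c)·c‖ ≤ θ‖f(c)‖ for all c ∈ A (θ ≥ 0), f is additive, and the limit δ(c) := lim_{n→∞} 2^{−n} g(2^n c) exists for all c. Then f(c²) = c·f(c) + δ(c)·c for all c ∈ A. -/

import Mathlib

open Filter Topology MulOpposite

set_option linter.unusedSectionVars false
set_option linter.unusedVariables false

section

variable {A X : Type*}
  [NormedRing A] [NormedAlgebra ℂ A] [CompleteSpace A]
  [NormedAddCommGroup X] [NormedSpace ℂ X] [CompleteSpace X]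
  [Module A X] [Module Aᵐᵒᵖ X]
  [IsBoundedSMul A X] [IsBoundedSMul Aᵐᵒᵖ X]
  [SMulCommClass A Aᵐᵒᵖ X]
  [IsScalarTower ℂ A X] [IsScalarTower ℂ Aᵐᵒᵖ X]

/-- A Jordan derivation from `A` into the bimodule `X`: a `ℂ`-linear map `δ` with
`δ(a²) = a·δ(a) + δ(a)·a`. -/
def IsJordanDeriv (δ : A → X) : Prop :=
  (∀ x y : A, δ (x + y) = δ x + δ y) ∧ (∀ (μ : ℂ) (x : A), δ (μ • x) = μ • δ x) ∧
    ∀ a : A, δ (a ^ 2) = a • δ a + op a • δ a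

/-- A generalized Jordan derivation: a `ℂ`-linear map `d` such that there is a Jordan
derivation `δ` with `d(a²) = a·d(a) + δ(a)·a`. -/
def IsGenJordanDeriv (d : A → X) : Prop :=
  (∀ x y : A, d (x + y) = d x + d y) ∧ (∀ (μ : ℂ) (x : A), d (μ • x) = μ • d x) ∧
    ∃ δ : A → X, IsJordanDeriv δ ∧ ∀ a : A, d (a ^ 2) = a • d a + op a • δ a

theorem map_two_pow_smul_of_additive {M N : Type*} [AddCommGroup M] [Module ℂ M]
    [AddCommGroup N] [Module ℂ N] {f : M → N} (hadd : ∀ a b : M, f (a + b) = f a + f b)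
    (n : ℕ) (a : M) : f ((2 : ℂ) ^ n • a) = (2 : ℂ) ^ n • f a := by
  simpa using map_natCast_smul (AddMonoidHom.mk' f hadd) ℂ ℂ (2 ^ n) a

/-- Substituting `t • c` into the approximate identity and dividing by `t²`: the error term
`θ * ‖f c‖` scales only like `t`, so it shrinks by the factor `‖t‖⁻¹`. -/
theorem norm_sub_smul_inv_smul_le {R M : Type*} [Ring R] [Algebra ℂ R]
    [NormedAddCommGroup M] [NormedSpace ℂ M] [Module R M] [Module Rᵐᵒᵖ M]
    [IsScalarTower ℂ R M] [IsScalarTower ℂ Rᵐᵒᵖ M] {f g : R → M} {θ : ℝ}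
    (hf : ∀ c : R, ‖f (c ^ 2) - c • f c - op c • g c‖ ≤ θ * ‖f c‖)
    {t : ℂ} (ht : t ≠ 0) (hft : ∀ a, f (t • a) = t • f a) (c : R) :
    ‖f (c ^ 2) - c • f c - op c • (t⁻¹ • g (t • c))‖ ≤ θ * ‖f c‖ * ‖t‖⁻¹ := by
  set D := f (c ^ 2) - c • f c - op c • (t⁻¹ • g (t • c))
  have hscale : f ((t • c) ^ 2) - (t • c) • f (t • c) - op (t • c) • g (t • c) = t • t • D := by
    have hg : g (t • c) = t • t⁻¹ • g (t • c) := by rw [smul_inv_smul₀ ht]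
    rw [smul_pow, sq t, mul_smul, hft, hft, hft, op_smul, smul_assoc, smul_assoc, smul_comm c t,
      hg, smul_comm (op c) t]
    simp only [D, smul_sub]
  have h := hf (t • c)
  rw [hscale, hft, norm_smul, norm_smul, norm_smul] at h
  have ht' : 0 < ‖t‖ := norm_pos_iff.mpr ht
  rw [le_mul_inv_iff₀ ht']
  nlinarith

theorem stmt_general (f g δ : A → X) (θ : ℝ)
    (hf : ∀ c : A, ‖f (c ^ 2) - c • f c - op c • g c‖ ≤ θ * ‖f c‖)
    (hadd : ∀ a b : A, f (a + b) = f a + f b)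
    (hδ : ∀ c : A, Tendsto (fun n : ℕ => ((2 : ℂ) ^ n)⁻¹ • g ((2 : ℂ) ^ n • c)) atTop (𝓝 (δ c))) :
    ∀ c : A, f (c ^ 2) = c • f c + op c • δ c := by
  intro c
  have hbound : Tendsto (fun n : ℕ => θ * ‖f c‖ * ‖(2 : ℂ) ^ n‖⁻¹) atTop (𝓝 0) := by
    simpa [← inv_pow] using tendsto_const_nhds.mul
      (tendsto_pow_atTop_nhds_zero_of_lt_one (r := (2 : ℝ)⁻¹) (by norm_num) (by norm_num))
  have hlim : Tendsto (fun n : ℕ => op c • (((2 : ℂ) ^ n)⁻¹ • g ((2 : ℂ) ^ n • c))) atTop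
      (𝓝 (f (c ^ 2) - c • f c)) := by
    rw [tendsto_iff_norm_sub_tendsto_zero]
    refine squeeze_zero (fun _ => norm_nonneg _) (fun n => ?_) hbound
    rw [norm_sub_rev]
    exact norm_sub_smul_inv_smul_le hf (pow_ne_zero n two_ne_zero)
      (map_two_pow_smul_of_additive hadd n) c
  rw [← tendsto_nhds_unique hlim ((hδ c).const_smul (op c)), add_sub_cancel]

theorem stmt (f g δ : A → X) (θ : ℝ) (hθ : 0 ≤ θ)
    (hf : ∀ c : A, ‖f (c ^ 2) - c • f c - op c • g c‖ ≤ θ * ‖f c‖)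
    (hadd : ∀ a b : A, f (a + b) = f a + f b)
    (hδ : ∀ c : A, Tendsto (fun n : ℕ => ((2 : ℂ) ^ n)⁻¹ • g ((2 : ℂ) ^ n • c)) atTop (𝓝 (δ c))) :
    ∀ c : A, f (c ^ 2) = c • f c + op c • δ c :=
  stmt_general f g δ θ hf hadd hδ
end
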